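/- Let μ be a natural number and let ν be a real number with ν = 0 or ν ≥ 1. Then for every t ∈ [0,1], (1−t)^ν · ∑_{ℓ=0}^{μ} binom(ν+ℓ−1, ℓ) · t^ℓ ≥ 1 − binom(ν+μ, μ+1) · t^{μ+1}, where binom denotes the generalized binomial coefficient. (This is the scalar-argument core of the paper's Proposition on the lower bound J_{N,k,p}(sI_k) ≥ 1 − binom(ν+μ, μ+1)(1−s)^{μ+1}, with ν = k(N−k−p)/2, μ = max(0, ⌊(p−1)/2⌋), and t = 1−s.) -/

import Mathlib

/-!
Write `S(t) = ∑_{ℓ ≤ μ} binom(ν+ℓ−1, ℓ) tˡ` for the truncated binomial series of `(1−t)^{−ν}` and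
`C = binom(ν+μ, μ+1)`. Absorption `(ℓ+1) binom(ν+ℓ, ℓ+1) = (ν+ℓ) binom(ν+ℓ−1, ℓ)` gives
`(1−t) S'(t) = ν S(t) − (μ+1) C t^μ`, so the derivative of `g(t) = (1−t)^ν S(t) + C t^{μ+1}` collapses to
`(μ+1) C t^μ (1 − (1−t)^{ν−1})`. This is nonnegative on `(0,1)`: for `ν ≥ 1` both factors are, and for
`ν = 0` the coefficient `C = binom(μ, μ+1)` vanishes. Hence `g` is nondecreasing and `g(t) ≥ g(0) = 1`.
-/

noncomputable section

/-- The generalized binomial coefficient `binom(x, n) = x(x−1)⋯(x−n+1)/n!`. -/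
def rchoose (x : ℝ) (n : ℕ) : ℝ := (∏ i ∈ Finset.range n, (x - i)) / (n.factorial : ℝ)

open Finset

lemma rchoose_zero (x : ℝ) : rchoose x 0 = 1 := by simp [rchoose]

lemma rchoose_natCast_of_lt {k n : ℕ} (h : k < n) : rchoose k n = 0 := by
  rw [rchoose, prod_eq_zero (mem_range.mpr h) (sub_self _), zero_div]

lemma rchoose_nonneg {x : ℝ} {n : ℕ} (h : (n : ℝ) - 1 ≤ x) : 0 ≤ rchoose x n := by
  refine div_nonneg (prod_nonneg fun i hi => ?_) (Nat.cast_nonneg _)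
  have : (i : ℝ) + 1 ≤ n := by exact_mod_cast mem_range.mp hi
  linarith

lemma succ_mul_rchoose_succ (x : ℝ) (n : ℕ) :
    ((n : ℝ) + 1) * rchoose x (n + 1) = x * rchoose (x - 1) n := by
  have hprod : ∏ i ∈ range (n + 1), (x - i) = x * ∏ i ∈ range n, (x - 1 - i) := by
    rw [prod_range_succ', mul_comm]
    congr 1
    · simp
    · exact prod_congr rfl fun i _ => by push_cast; ring
  rw [rchoose, rchoose, hprod, Nat.factorial_succ]
  push_cast
  field_simp

def binomialSeriesTrunc (ν : ℝ) (μ : ℕ) (t : ℝ) : ℝ :=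
  ∑ ℓ ∈ range (μ + 1), rchoose (ν + ℓ - 1) ℓ * t ^ ℓ

lemma binomialSeriesTrunc_zero_right (ν : ℝ) (μ : ℕ) : binomialSeriesTrunc ν μ 0 = 1 := by
  simp [binomialSeriesTrunc, sum_range_succ', rchoose_zero]

lemma hasDerivAt_binomialSeriesTrunc (ν : ℝ) (μ : ℕ) (t : ℝ) :
    HasDerivAt (binomialSeriesTrunc ν μ)
      (∑ ℓ ∈ range μ, ((ℓ : ℝ) + 1) * rchoose (ν + ℓ) (ℓ + 1) * t ^ ℓ) t := by
  have h : HasDerivAt (binomialSeriesTrunc ν μ)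
      (∑ ℓ ∈ range (μ + 1), rchoose (ν + ℓ - 1) ℓ * (ℓ * t ^ (ℓ - 1))) t :=
    HasDerivAt.fun_sum fun ℓ _ => (hasDerivAt_pow ℓ t).const_mul _
  refine h.congr_deriv ?_
  rw [sum_range_succ']
  simp only [Nat.cast_zero, zero_mul, mul_zero, add_zero]
  refine sum_congr rfl fun ℓ _ => ?_
  push_cast
  rw [← add_assoc, add_sub_cancel_right]
  ring

lemma one_sub_mul_deriv_binomialSeriesTrunc (ν : ℝ) (μ : ℕ) (t : ℝ) :
    (1 - t) * ∑ ℓ ∈ range μ, ((ℓ : ℝ) + 1) * rchoose (ν + ℓ) (ℓ + 1) * t ^ ℓ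
      = ν * binomialSeriesTrunc ν μ t - ((μ : ℝ) + 1) * rchoose (ν + μ) (μ + 1) * t ^ μ := by
  induction μ with
  | zero => simp [binomialSeriesTrunc, rchoose]
  | succ μ ih =>
    have habs := succ_mul_rchoose_succ (ν + (μ + 1)) (μ + 1)
    simp only [binomialSeriesTrunc] at ih ⊢
    rw [sum_range_succ, sum_range_succ (n := μ + 1)]
    push_cast at habs ih ⊢
    rw [show ν + ((μ : ℝ) + 1) - 1 = ν + μ by ring] at habs ⊢
    linear_combination ih + t ^ (μ + 1) * habs

def truncGap (ν : ℝ) (μ : ℕ) (t : ℝ) : ℝ :=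
  (1 - t) ^ ν * binomialSeriesTrunc ν μ t + rchoose (ν + μ) (μ + 1) * t ^ (μ + 1)

lemma truncGap_zero_right (ν : ℝ) (μ : ℕ) : truncGap ν μ 0 = 1 := by
  simp [truncGap, binomialSeriesTrunc_zero_right]

lemma hasDerivAt_truncGap (ν : ℝ) (μ : ℕ) {x : ℝ} (hx : x < 1) :
    HasDerivAt (truncGap ν μ)
      (((μ : ℝ) + 1) * x ^ μ * (rchoose (ν + μ) (μ + 1) * (1 - (1 - x) ^ (ν - 1)))) x := by
  have h1x : 0 < 1 - x := by linarith
  have hpow : HasDerivAt (fun s => (1 - s) ^ ν) (-1 * ν * (1 - x) ^ (ν - 1)) x := by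
    simpa using ((hasDerivAt_id x).const_sub 1).rpow_const (p := ν) (Or.inl h1x.ne')
  have h := (hpow.fun_mul (hasDerivAt_binomialSeriesTrunc ν μ x)).fun_add
    ((hasDerivAt_pow (μ + 1) x).const_mul (rchoose (ν + μ) (μ + 1)))
  refine h.congr_deriv ?_
  rw [← sub_add_cancel ν 1, Real.rpow_add_one h1x.ne', sub_add_cancel]
  push_cast
  linear_combination (1 - x) ^ (ν - 1) * one_sub_mul_deriv_binomialSeriesTrunc ν μ x

lemma rchoose_mul_one_sub_rpow_nonneg {ν : ℝ} (hν : ν = 0 ∨ 1 ≤ ν) (μ : ℕ) {x : ℝ}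
    (hx₀ : 0 ≤ x) (hx₁ : x < 1) : 0 ≤ rchoose (ν + μ) (μ + 1) * (1 - (1 - x) ^ (ν - 1)) := by
  rcases hν with rfl | hν
  · rw [zero_add, rchoose_natCast_of_lt (Nat.lt_succ_self μ), zero_mul]
  · refine mul_nonneg (rchoose_nonneg (by push_cast; linarith)) (sub_nonneg.mpr ?_)
    exact Real.rpow_le_one (by linarith) (by linarith) (by linarith)

lemma monotoneOn_truncGap {ν : ℝ} (hν : ν = 0 ∨ 1 ≤ ν) (μ : ℕ) :
    MonotoneOn (truncGap ν μ) (Set.Icc 0 1) := by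
  have hν₀ : 0 ≤ ν := by rcases hν with rfl | hν <;> linarith
  have hS : Continuous (binomialSeriesTrunc ν μ) :=
    continuous_iff_continuousAt.mpr fun x => (hasDerivAt_binomialSeriesTrunc ν μ x).continuousAt
  have hcont : Continuous (truncGap ν μ) :=
    ((Continuous.rpow_const (by fun_prop) fun _ => Or.inr hν₀).mul hS).add (by fun_prop)
  refine monotoneOn_of_deriv_nonneg (convex_Icc 0 1) hcont.continuousOn
    (fun x hx => ?_) (fun x hx => ?_) <;> rw [interior_Icc] at hx
  · exact (hasDerivAt_truncGap ν μ hx.2).differentiableAt.differentiableWithinAt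
  · rw [(hasDerivAt_truncGap ν μ hx.2).deriv]
    exact mul_nonneg (mul_nonneg (by positivity) (pow_nonneg hx.1.le μ))
      (rchoose_mul_one_sub_rpow_nonneg hν μ hx.1.le hx.2)

/-- Scalar core of the lower bound `J_{N,k,p}(sI_k) ≥ 1 − binom(ν+μ, μ+1)(1−s)^{μ+1}`:
for `ν = 0` or `ν ≥ 1` and `t ∈ [0,1]`,
`(1−t)^ν · ∑_{ℓ=0}^{μ} binom(ν+ℓ−1, ℓ) t^ℓ ≥ 1 − binom(ν+μ, μ+1) t^{μ+1}`.
Here `(1−t)^ν` is the real power, with the convention `0^0 = 1`. -/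
theorem scalar_lower_bound (μ : ℕ) (ν : ℝ) (hν : ν = 0 ∨ 1 ≤ ν)
    (t : ℝ) (ht : t ∈ Set.Icc (0 : ℝ) 1) :
    1 - rchoose (ν + μ) (μ + 1) * t ^ (μ + 1)
      ≤ (1 - t) ^ ν * ∑ ℓ ∈ Finset.range (μ + 1), rchoose (ν + ℓ - 1) ℓ * t ^ ℓ := by
  have h := monotoneOn_truncGap hν μ ⟨le_rfl, zero_le_one⟩ ht ht.1
  rw [truncGap_zero_right] at h
  unfold truncGap binomialSeriesTrunc at h
  linarith
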